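/- Let g = so(3), realized as the 3-dimensional real Lie algebra with basis e₁, e₂, e₃ and brackets [e₁,e₃] = -e₂, [e₂,e₃] = e₁, [e₁,e₂] = e₃. Then g × g admits an integrable complex structure. -/

import Mathlib

/-- Componentwise bracket on the product. -/
instance prodBracket {L : Type*} [LieRing L] : Bracket (L × L) (L × L) :=
  ⟨fun x y => (⁅x.1, y.1⁆, ⁅x.2, y.2⁆)⟩

instance prodLieRing {L : Type*} [LieRing L] : LieRing (L × L) where
  add_lie x y z := by ext <;> simp [Bracket.bracket]
  lie_add x y z := by ext <;> simp [Bracket.bracket]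
  lie_self x := by ext <;> simp [Bracket.bracket]
  leibniz_lie x y z := by ext <;> simp [Bracket.bracket]

instance prodLieAlgebra {L : Type*} [LieRing L] [LieAlgebra ℝ L] : LieAlgebra ℝ (L × L) where
  lie_smul t x y := by ext <;> simp [Bracket.bracket]

/-!
The complex structure is of Samelson type: on each factor it acts on `span {e₁, e₂}` as `ad e₃`
(`e₁ ↦ e₂ ↦ -e₁`), and it rotates the two copies of `e₃` into each other.

If `J² = -1`, the Nijenhuis tensor is antisymmetric and satisfies
`N (J x) y = N x (J y) = -J (N x y)`, so it vanishes as soon as it vanishes on pairs taken from a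
family `u` such that the `u i` and `J (u i)` span. For the frame `(e₁, 0), (e₃, 0), (0, e₁)` only
three pairs remain, and they need nothing beyond `[e₃, e₁] = e₂` and `[e₃, e₂] = -e₁`.
-/

open Module Submodule

section Nijenhuis

variable {R L : Type*} [CommRing R] [LieRing L] [LieAlgebra R L]

def nijenhuis (J : L →ₗ[R] L) : L →ₗ[R] L →ₗ[R] L :=
  LinearMap.mk₂ R (fun x y => ⁅x, y⁆ + J ⁅J x, y⁆ + J ⁅x, J y⁆ - ⁅J x, J y⁆)
    (fun x x' y => by simp only [add_lie, map_add]; abel)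
    (fun t x y => by simp only [smul_lie, map_smul, smul_add, smul_sub])
    (fun x y y' => by simp only [lie_add, map_add]; abel)
    (fun t x y => by simp only [lie_smul, map_smul, smul_add, smul_sub])

variable {J : L →ₗ[R] L}

theorem nijenhuis_apply (x y : L) :
    nijenhuis J x y = ⁅x, y⁆ + J ⁅J x, y⁆ + J ⁅x, J y⁆ - ⁅J x, J y⁆ := rfl

theorem nijenhuis_swap (x y : L) : nijenhuis J y x = -nijenhuis J x y := by
  rw [nijenhuis_apply, nijenhuis_apply, ← lie_skew x y, ← lie_skew (J x) y, ← lie_skew x (J y),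
    ← lie_skew (J x) (J y), map_neg, map_neg]
  abel

theorem nijenhuis_self (x : L) : nijenhuis J x x = 0 := by
  rw [nijenhuis_apply, ← lie_skew x (J x), map_neg, lie_self, lie_self]
  abel

section ComplexStructure

variable (hJ : ∀ x, J (J x) = -x)
include hJ

theorem nijenhuis_apply_left (x y : L) : nijenhuis J (J x) y = -J (nijenhuis J x y) := by
  simp only [nijenhuis_apply, hJ, neg_lie, map_sub, map_add, map_neg]
  abel

theorem nijenhuis_apply_right (x y : L) : nijenhuis J x (J y) = -J (nijenhuis J x y) := by
  rw [nijenhuis_swap, nijenhuis_apply_left hJ, nijenhuis_swap y, map_neg, neg_neg]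

theorem nijenhuis_eq_zero_of_span {ι : Type*} [LinearOrder ι] (u : ι → L)
    (hu : span R (Set.range u ∪ Set.range (J ∘ u)) = ⊤)
    (h : ∀ i j, i < j → nijenhuis J (u i) (u j) = 0) : nijenhuis J = 0 := by
  have hpair (i j : ι) : nijenhuis J (u i) (u j) = 0 := by
    rcases lt_trichotomy i j with hij | rfl | hij
    · exact h i j hij
    · exact nijenhuis_self _
    · rw [nijenhuis_swap, h j i hij, neg_zero]
  refine LinearMap.ext_on hu fun x hx => LinearMap.ext_on hu fun y hy => ?_
  rcases hx with ⟨i, rfl⟩ | ⟨i, rfl⟩ <;> rcases hy with ⟨j, rfl⟩ | ⟨j, rfl⟩ <;>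
    simp [nijenhuis_apply_left hJ, nijenhuis_apply_right hJ, hpair]

end ComplexStructure

end Nijenhuis

noncomputable section So3

variable {R M : Type*} [CommRing R] [AddCommGroup M] [Module R M] (b : Basis (Fin 3) R M)

def so3ProdComplexStructure : M × M →ₗ[R] M × M :=
  (b.prod b).constr R
    (Sum.elim ![(b 1, 0), -(b 0, 0), (0, b 2)] ![(0, b 1), -(0, b 0), -(b 2, 0)])

@[simp]
theorem so3ProdComplexStructure_inl (i : Fin 3) :
    so3ProdComplexStructure b (b i, 0) = ![(b 1, 0), -(b 0, 0), (0, b 2)] i := by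
  rw [← show b.prod b (.inl i) = (b i, 0) by simp, so3ProdComplexStructure, Basis.constr_basis,
    Sum.elim_inl]

@[simp]
theorem so3ProdComplexStructure_inr (i : Fin 3) :
    so3ProdComplexStructure b (0, b i) = ![(0, b 1), -(0, b 0), -(b 2, 0)] i := by
  rw [← show b.prod b (.inr i) = (0, b i) by simp, so3ProdComplexStructure, Basis.constr_basis,
    Sum.elim_inr]

@[simp]
theorem so3ProdComplexStructure_neg_inl (x : M) :
    so3ProdComplexStructure b (-x, 0) = -so3ProdComplexStructure b (x, 0) := by
  rw [← map_neg, Prod.neg_mk, neg_zero]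

@[simp]
theorem so3ProdComplexStructure_neg_inr (x : M) :
    so3ProdComplexStructure b (0, -x) = -so3ProdComplexStructure b (0, x) := by
  rw [← map_neg, Prod.neg_mk, neg_zero]

theorem so3ProdComplexStructure_apply_apply (x : M × M) :
    so3ProdComplexStructure b (so3ProdComplexStructure b x) = -x := by
  have : so3ProdComplexStructure b ∘ₗ so3ProdComplexStructure b = -LinearMap.id :=
    (b.prod b).ext fun i => by rcases i with i | i <;> fin_cases i <;> simp
  simpa using LinearMap.congr_fun this x

def so3ProdFrame : Fin 3 → M × M := ![(b 0, 0), (b 2, 0), (0, b 0)]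

theorem span_so3ProdFrame :
    span R (Set.range (so3ProdFrame b) ∪
      Set.range (so3ProdComplexStructure b ∘ so3ProdFrame b)) = ⊤ := by
  rw [eq_top_iff, ← (b.prod b).span_eq]
  refine span_mono ?_
  rintro _ ⟨i | i, rfl⟩ <;> fin_cases i <;> simp [so3ProdFrame, Fin.exists_fin_succ]

end So3

theorem nijenhuis_so3ProdComplexStructure_frame {g : Type*} [LieRing g] [LieAlgebra ℝ g]
    (b : Basis (Fin 3) ℝ g) (h13 : ⁅b 0, b 2⁆ = -b 1) (h23 : ⁅b 1, b 2⁆ = b 0) (i j : Fin 3)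
    (hij : i < j) :
    nijenhuis (so3ProdComplexStructure b) (so3ProdFrame b i) (so3ProdFrame b j) = 0 := by
  have h31 : ⁅b 2, b 0⁆ = b 1 := by rw [← lie_skew, h13, neg_neg]
  have h32 : ⁅b 2, b 1⁆ = -b 0 := by rw [← lie_skew, h23]
  fin_cases i <;> fin_cases j <;>
    simp [nijenhuis_apply, so3ProdFrame, Prod.mk_zero_zero, h13, h23, h31, h32] at hij ⊢

theorem so3_product_admits_general {g : Type*} [LieRing g] [LieAlgebra ℝ g]
    (b : Module.Basis (Fin 3) ℝ g) 
    (h13 : ⁅b 0, b 2⁆ = -b 1) (h23 : ⁅b 1, b 2⁆ = b 0) :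
    ∃ 𝒥 : (g × g) →ₗ[ℝ] (g × g), (∀ x, 𝒥 (𝒥 x) = -x) ∧
      ∀ x y : g × g,
        ⁅x, y⁆ + 𝒥 ⁅𝒥 x, y⁆ + 𝒥 ⁅x, 𝒥 y⁆ - ⁅𝒥 x, 𝒥 y⁆ = 0 := by
  have hJ := so3ProdComplexStructure_apply_apply b
  have hN : nijenhuis (so3ProdComplexStructure b) = 0 :=
    nijenhuis_eq_zero_of_span hJ (so3ProdFrame b) (span_so3ProdFrame b)
      (nijenhuis_so3ProdComplexStructure_frame b h13 h23)
  exact ⟨so3ProdComplexStructure b, hJ, fun x y => LinearMap.congr_fun₂ hN x y⟩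

theorem so3_product_admits {g : Type*} [LieRing g] [LieAlgebra ℝ g]
    (b : Module.Basis (Fin 3) ℝ g) 
    (h13 : ⁅b 0, b 2⁆ = -b 1) (h23 : ⁅b 1, b 2⁆ = b 0) (h12 : ⁅b 0, b 1⁆ = b 2) :
    ∃ 𝒥 : (g × g) →ₗ[ℝ] (g × g), (∀ x, 𝒥 (𝒥 x) = -x) ∧
      ∀ x y : g × g,
        ⁅x, y⁆ + 𝒥 ⁅𝒥 x, y⁆ + 𝒥 ⁅x, 𝒥 y⁆ - ⁅𝒥 x, 𝒥 y⁆ = 0 :=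
  so3_product_admits_general b h13 h23
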